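/- arXiv:1211.0463 — 2 statements merged into one kernel-verified Lean document; each statement's English description precedes it below -/
import Mathlib

section
/- Let G be a finite simple graph with minimum degree δ and maximum degree Δ. If δ > log_3(2Δ² − 2Δ + 1) + 2, then ch_σ^e(G) ≤ 3: for every linear order on E(G) and every assignment to each edge e of a set L_e of three real numbers, there exists a weighting w with w(e) ∈ L_e for every edge e whose induced sequence colouring of the vertices is proper. -/
/-!
Common definitions: sequence colourings induced by an edge weighting and a linear
order on the edge set of a finite simple graph.
-/

open Finset

variable {V : Type*}

/-- The list of edges incident to `v`, sorted in increasing order with respect to the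
linear order `σ` on `E(G)`. -/
noncomputable def incEdges [Fintype V] [DecidableEq V] (G : SimpleGraph V) [DecidableRel G.Adj]
    (σ : LinearOrder G.edgeSet) (v : V) : List G.edgeSet :=
  letI := σ
  ((Finset.univ : Finset G.edgeSet).filter (fun e : G.edgeSet => v ∈ (e : Sym2 V))).sort σ.le

/-- The induced sequence colouring: `c(v)` is the list of weights `w(e)` of the edges `e`
incident to `v`, written in increasing order of `e` with respect to `σ`. -/
noncomputable def seqColor [Fintype V] [DecidableEq V] (G : SimpleGraph V) [DecidableRel G.Adj]
    (σ : LinearOrder G.edgeSet) {α : Type*} (w : G.edgeSet → α) (v : V) : List α :=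
  (incEdges G σ v).map w

/-- The induced sequence colouring is proper: adjacent vertices receive distinct sequences. -/
def ProperSeq [Fintype V] [DecidableEq V] (G : SimpleGraph V) [DecidableRel G.Adj]
    (σ : LinearOrder G.edgeSet) (w : G.edgeSet → ℝ) : Prop :=
  ∀ u v : V, G.Adj u v → seqColor G σ w u ≠ seqColor G σ w v

/-!
Draw the weighting uniformly from `∏ₑ L e`. For an edge `uv`, `c(u) = c(v)` forces the `k`-th
edges at `u` and at `v` to carry equal weights for every `k`; apart from the position of `uv`
itself these are at least `δ - 1` constraints, each tying a coordinate to another, unconstrained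
one, so this bad event has probability at most `3^(1-δ)`. It is determined by the weights of the
edges meeting `uv`, hence mutually independent of the bad events of all but at most `2Δ² - 2δ`
other edges (double count incidences with `N(u) ∪ N(v)`). The hypothesis on `δ` gives
`e (2Δ² - 2δ + 1) 3^(1-δ) ≤ 1`, and the symmetric Lovász Local Lemma, in its counting form for
a finite product space, provides a weighting that avoids every bad event.
-/

open Fintype

section ProductSpace

variable {ι α : Type*} [Fintype ι] [DecidableEq ι] (L : ι → Finset α)

lemma piecewise_mem_piFinset {a b : ι → α} (ha : a ∈ piFinset L) (hb : b ∈ piFinset L)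
    (I : Finset ι) : I.piecewise a b ∈ piFinset L := by
  rw [mem_piFinset] at *
  intro i
  by_cases hi : i ∈ I <;> simp [hi, ha i, hb i]

/-- Exchanging the `I`-coordinates of two points of `piFinset L` is an involution carrying
`{p ∧ q} × piFinset L` onto `{p} × {q}`. -/
lemma card_filter_and_mul_card (I : Finset ι) (p q : (ι → α) → Prop)
    [DecidablePred p] [DecidablePred q]
    (hp : DependsOn p I) (hq : DependsOn q (↑I)ᶜ) :
    #{w ∈ piFinset L | p w ∧ q w} * #(piFinset L)
      = #{w ∈ piFinset L | p w} * #{w ∈ piFinset L | q w} := by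
  rw [← card_product, ← card_product]
  refine card_bij' (fun w _ => (I.piecewise w.1 w.2, I.piecewise w.2 w.1))
    (fun w _ => (I.piecewise w.1 w.2, I.piecewise w.2 w.1)) ?_ ?_
    (fun w _ => by simp [piecewise_same]) (fun w _ => by simp [piecewise_same])
  · rintro ⟨a, b⟩ hab
    simp only [mem_product, mem_filter] at hab ⊢
    obtain ⟨⟨ha, hpa, hqa⟩, hb⟩ := hab
    exact ⟨⟨piecewise_mem_piFinset L ha hb I, (hp fun i hi => by simp_all).mpr hpa⟩,
      piecewise_mem_piFinset L hb ha I, (hq fun i hi => by simp_all).mpr hqa⟩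
  · rintro ⟨a, b⟩ hab
    simp only [mem_product, mem_filter] at hab ⊢
    obtain ⟨⟨ha, hpa⟩, hb, hqb⟩ := hab
    exact ⟨⟨piecewise_mem_piFinset L ha hb I, (hp fun i hi => by simp_all).mpr hpa,
      (hq fun i hi => by simp_all).mpr hqb⟩, piecewise_mem_piFinset L hb ha I⟩

lemma card_le_prod_of_eqOn_compl [DecidableEq α] (A : Finset ι) {s : Finset (ι → α)}
    (hs : s ⊆ piFinset L)
    (hdet : ∀ w ∈ s, ∀ w' ∈ s, (∀ i ∉ A, w i = w' i) → w = w') :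
    #s ≤ ∏ i, if i ∈ A then 1 else #(L i) := by
  obtain rfl | ⟨w₀, -⟩ := s.eq_empty_or_nonempty
  · simp
  calc #s ≤ #(piFinset fun i => if i ∈ A then {w₀ i} else L i) := by
        refine card_le_card_of_injOn (fun w i => if i ∈ A then w₀ i else w i) (fun w hw => ?_)
          fun w hw w' hw' h => hdet w hw w' hw' fun i hi => by simpa [hi] using congrFun h i
        simp only [coe_piFinset, Set.mem_pi, Set.mem_univ, forall_const]
        intro i
        by_cases hi : i ∈ A <;> simp [hi, mem_piFinset.mp (hs hw) i]
    _ = ∏ i, if i ∈ A then 1 else #(L i) := by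
        rw [card_piFinset]
        exact prod_congr rfl fun i _ => by split_ifs <;> simp

/-- A point satisfying the constraints is determined by its coordinates outside `K.image a`,
since each coordinate `a k` is copied from the coordinate `b k` outside it. -/
lemma card_filter_forall_eq_mul_prod_le [DecidableEq α] {κ : Type*} (K : Finset κ)
    (a b : κ → ι) (ha : Set.InjOn a K) (hab : ∀ k ∈ K, ∀ k' ∈ K, b k ≠ a k') :
    #{w ∈ piFinset L | ∀ k ∈ K, w (a k) = w (b k)} * ∏ k ∈ K, #(L (a k))
      ≤ #(piFinset L) := by
  have hdet : ∀ w ∈ {w ∈ piFinset L | ∀ k ∈ K, w (a k) = w (b k)},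
      ∀ w' ∈ {w ∈ piFinset L | ∀ k ∈ K, w (a k) = w (b k)},
      (∀ i ∉ K.image a, w i = w' i) → w = w' := by
    intro w hw w' hw' h
    ext i
    by_cases hi : i ∈ K.image a
    · obtain ⟨k, hk, rfl⟩ := mem_image.mp hi
      have hbk : b k ∉ K.image a := by
        simpa using fun k' hk' => (hab k hk k' hk').symm
      rw [(mem_filter.mp hw).2 k hk, (mem_filter.mp hw').2 k hk, h _ hbk]
    · exact h i hi
  calc #{w ∈ piFinset L | ∀ k ∈ K, w (a k) = w (b k)} * ∏ k ∈ K, #(L (a k))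
      ≤ (∏ i, if i ∈ K.image a then 1 else #(L i))
          * ∏ i, if i ∈ K.image a then #(L i) else 1 := by
        rw [Fintype.prod_ite_mem, prod_image ha]
        exact Nat.mul_le_mul_right _ (card_le_prod_of_eqOn_compl L _ (filter_subset _ _) hdet)
    _ = #(piFinset L) := by
        rw [← prod_mul_distrib, card_piFinset]
        exact prod_congr rfl fun i _ => by split_ifs <;> simp

end ProductSpace

namespace LocalLemma

variable {ι α J : Type*} [Fintype ι] [DecidableEq ι] [Fintype J] [DecidableEq J]
  (L : ι → Finset α) (P : J → (ι → α) → Prop) [∀ j, DecidablePred (P j)]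

def avoiding (S : Finset J) : Finset (ι → α) := {w ∈ piFinset L | ∀ j ∈ S, ¬ P j w}

@[simp]
lemma avoiding_empty : avoiding L P ∅ = piFinset L := by
  simp [avoiding]

lemma avoiding_anti {S T : Finset J} (h : S ⊆ T) : avoiding L P T ⊆ avoiding L P S :=
  monotone_filter_right _ fun _ _ hw j hj => hw j (h hj)

lemma card_avoiding_insert (S : Finset J) (j : J) :
    (#(avoiding L P (insert j S)) : ℝ)
      = #(avoiding L P S) - #{w ∈ avoiding L P S | P j w} := by
  have h : avoiding L P (insert j S) = {w ∈ avoiding L P S | ¬ P j w} := by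
    ext w
    simp only [avoiding, mem_filter, forall_mem_insert]
    tauto
  rw [h, eq_sub_iff_add_eq', ← Nat.cast_add, card_filter_add_card_filter_not]

/-- Removing the events of `T` one at a time, each removal keeps a `1 - x` fraction. -/
lemma pow_mul_card_avoiding_le {x : ℝ} (hx : x ≤ 1) (B T : Finset J)
    (h : ∀ a ∈ T, ∀ T' ⊆ T.erase a,
      #{w ∈ avoiding L P (B ∪ T') | P a w} ≤ x * #(avoiding L P (B ∪ T'))) :
    (1 - x) ^ #T * #(avoiding L P B) ≤ #(avoiding L P (B ∪ T)) := by
  induction T using Finset.induction_on with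
  | empty => simp
  | @insert a T ha ih =>
    have hT : (1 - x) ^ #T * #(avoiding L P B) ≤ #(avoiding L P (B ∪ T)) :=
      ih fun b hb T' hT' => h b (mem_insert_of_mem hb) T'
        (hT'.trans (erase_subset_erase b (subset_insert a T)))
    have ha' := h a (mem_insert_self a T) T (by rw [erase_insert ha])
    rw [union_insert, card_avoiding_insert, card_insert_of_notMem ha, pow_succ]
    nlinarith

lemma card_filter_avoiding_mul_card (vbl : J → Finset ι)
    (hdet : ∀ j, DependsOn (P j) (vbl j))
    (S : Finset J) (j : J) (hS : ∀ j' ∈ S, Disjoint (vbl j') (vbl j)) :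
    #{w ∈ avoiding L P S | P j w} * #(piFinset L)
      = #{w ∈ piFinset L | P j w} * #(avoiding L P S) := by
  have hS' : DependsOn (fun w => ∀ j' ∈ S, ¬ P j' w) (↑(vbl j))ᶜ := fun a b hab =>
    propext <| forall₂_congr fun j' hj' => not_congr <| (hdet j' fun i hi =>
      hab i (disjoint_left.mp (hS j' hj') hi)).to_iff
  rw [avoiding, filter_filter, ← card_filter_and_mul_card L (vbl j) _ _ (hdet j) hS']
  simp_rw [and_comm]

lemma card_filter_avoiding_le_of_forall_disjoint (vbl : J → Finset ι)
    (hdet : ∀ j, DependsOn (P j) (vbl j))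
    {c : ℝ} {S : Finset J} {j : J} (hS : ∀ j' ∈ S, Disjoint (vbl j') (vbl j))
    (hp : #{w ∈ piFinset L | P j w} ≤ c * #(piFinset L)) :
    #{w ∈ avoiding L P S | P j w} ≤ c * #(avoiding L P S) := by
  obtain hΩ | hΩ := (piFinset L).eq_empty_or_nonempty
  · simp [avoiding, hΩ]
  have hΩ' : (0 : ℝ) < #(piFinset L) := by exact_mod_cast hΩ.card_pos
  have hmul : (#{w ∈ avoiding L P S | P j w} : ℝ) * #(piFinset L)
      = #{w ∈ piFinset L | P j w} * #(avoiding L P S) := by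
    exact_mod_cast card_filter_avoiding_mul_card L P vbl hdet S j hS
  refine le_of_mul_le_mul_right ?_ hΩ'
  rw [hmul]
  calc (#{w ∈ piFinset L | P j w} : ℝ) * #(avoiding L P S)
      ≤ c * #(piFinset L) * #(avoiding L P S) := by gcongr
    _ = c * #(avoiding L P S) * #(piFinset L) := by ring

variable {P} (vbl : J → Finset ι) {x : ℝ} {D : ℕ}

/-- Conditioned on avoiding the events of `S`, an event outside `S` has probability at most `x`:
the events of `S` sharing no variable with it are independent of it, and avoiding the at most
`D` remaining ones costs at most a factor `(1 - x) ^ D`. -/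
lemma card_filter_avoiding_le (hdet : ∀ j, DependsOn (P j) (vbl j)) (hx0 : 0 ≤ x)
    (hx1 : x ≤ 1)
    (hdep : ∀ j, #{j' | j' ≠ j ∧ ¬ Disjoint (vbl j') (vbl j)} ≤ D)
    (hp : ∀ j, #{w ∈ piFinset L | P j w} ≤ x * (1 - x) ^ D * #(piFinset L))
    (S : Finset J) {j : J} (hj : j ∉ S) :
    #{w ∈ avoiding L P S | P j w} ≤ x * #(avoiding L P S) := by
  induction S using Finset.strongInduction generalizing j with
  | H S ih =>
  set S₁ := {j' ∈ S | ¬ Disjoint (vbl j') (vbl j)}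
  set S₂ := {j' ∈ S | Disjoint (vbl j') (vbl j)}
  have hS₂ : ∀ j' ∈ S₂, Disjoint (vbl j') (vbl j) := fun j' hj' => (mem_filter.mp hj').2
  have hS₁D : #S₁ ≤ D := (card_le_card fun j' hj' => by
      simp only [S₁, mem_filter] at hj'
      simpa using ⟨fun h => hj (h ▸ hj'.1), hj'.2⟩).trans (hdep j)
  have hchain : (1 - x) ^ #S₁ * #(avoiding L P S₂) ≤ #(avoiding L P S) := by
    have hS : S₂ ∪ S₁ = S := filter_union_filter_not_eq _ S
    refine hS ▸ pow_mul_card_avoiding_le L P hx1 S₂ S₁ fun a ha T' hT' => ih _ ?_ ?_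
    · have haS : a ∈ S := mem_of_mem_filter a ha
      refine ssubset_of_subset_of_ne (hS ▸ union_subset_union_right
        (hT'.trans (erase_subset a S₁))) fun h => ?_
      rw [← h] at haS
      rcases mem_union.mp haS with h₂ | h'
      · exact (mem_filter.mp ha).2 (mem_filter.mp h₂).2
      · exact (notMem_erase a S₁) (hT' h')
    · rw [mem_union, not_or]
      exact ⟨fun h₂ => (mem_filter.mp ha).2 (mem_filter.mp h₂).2,
        fun h' => notMem_erase a S₁ (hT' h')⟩
  calc (#{w ∈ avoiding L P S | P j w} : ℝ)
      ≤ #{w ∈ avoiding L P S₂ | P j w} := by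
        gcongr; exact avoiding_anti L P (filter_subset _ _)
    _ ≤ x * (1 - x) ^ D * #(avoiding L P S₂) :=
        card_filter_avoiding_le_of_forall_disjoint L P vbl hdet hS₂ (hp j)
    _ ≤ x * ((1 - x) ^ #S₁ * #(avoiding L P S₂)) := by
        have := pow_le_pow_of_le_one (sub_nonneg.mpr hx1) (by linarith) hS₁D
        rw [← mul_assoc]
        gcongr
    _ ≤ x * #(avoiding L P S) := by gcongr

theorem exists_forall_not (hdet : ∀ j, DependsOn (P j) (vbl j)) (hx0 : 0 ≤ x) (hx1 : x < 1)
    (hdep : ∀ j, #{j' | j' ≠ j ∧ ¬ Disjoint (vbl j') (vbl j)} ≤ D)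
    (hp : ∀ j, #{w ∈ piFinset L | P j w} ≤ x * (1 - x) ^ D * #(piFinset L))
    (hL : ∀ i, (L i).Nonempty) :
    ∃ w ∈ piFinset L, ∀ j, ¬ P j w := by
  have hchain := pow_mul_card_avoiding_le L P hx1.le ∅ univ fun a _ T' hT' =>
    card_filter_avoiding_le L vbl hdet hx0 hx1.le hdep hp (∅ ∪ T')
      fun h => notMem_erase a _ (hT' (by simpa using h))
  have hpos : (0 : ℝ) < (1 - x) ^ #(univ : Finset J) * #(piFinset L) :=
    mul_pos (pow_pos (by linarith) _) (by exact_mod_cast (piFinset_nonempty.mpr hL).card_pos)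
  rw [avoiding_empty, empty_union] at hchain
  obtain ⟨w, hw⟩ := card_pos.mp (by exact_mod_cast hpos.trans_le hchain)
  simp only [avoiding, mem_filter, mem_univ, forall_const] at hw
  exact ⟨w, hw⟩

lemma exp_neg_one_le_one_sub_inv_pow (D : ℕ) :
    Real.exp (-1) ≤ (1 - 1 / ((D : ℝ) + 1)) ^ D := by
  rcases D.eq_zero_or_pos with rfl | hD
  · simp
  have h : 1 - 1 / ((D : ℝ) + 1) = (1 + (D : ℝ)⁻¹)⁻¹ := by
    field_simp
    ring
  rw [h, inv_pow, Real.exp_neg]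
  exact inv_anti₀ (by positivity) Real.one_add_inv_pow_le_exp

theorem exists_forall_not_of_symmetric (hdet : ∀ j, DependsOn (P j) (vbl j)) (hD : 0 < D)
    (hdep : ∀ j, #{j' | j' ≠ j ∧ ¬ Disjoint (vbl j') (vbl j)} ≤ D)
    (hp : ∀ j, Real.exp 1 * (D + 1) * #{w ∈ piFinset L | P j w} ≤ #(piFinset L))
    (hL : ∀ i, (L i).Nonempty) :
    ∃ w ∈ piFinset L, ∀ j, ¬ P j w := by
  have hD' : (1 : ℝ) < D + 1 := by norm_cast; omega
  refine exists_forall_not L vbl hdet (x := 1 / (D + 1)) (by positivity)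
    ((div_lt_one (by linarith)).mpr hD') hdep (fun j => ?_) hL
  have hx : Real.exp (-1) / (D + 1) ≤ 1 / (D + 1) * (1 - 1 / (D + 1)) ^ D := by
    rw [one_div_mul_eq_div]
    gcongr
    exact exp_neg_one_le_one_sub_inv_pow D
  calc (#{w ∈ piFinset L | P j w} : ℝ)
      = Real.exp (-1) / (D + 1) * (Real.exp 1 * (D + 1) * #{w ∈ piFinset L | P j w}) := by
        rw [Real.exp_neg]; field_simp
    _ ≤ 1 / (D + 1) * (1 - 1 / (D + 1)) ^ D * #(piFinset L) :=
        mul_le_mul hx (hp j) (by positivity) ((by positivity : (0 : ℝ) ≤ _).trans hx)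

end LocalLemma

lemma card_add_card_le_sum {ι : Type*} [DecidableEq ι] {s t : Finset ι} (hst : s ⊆ t)
    {c : ι → ℕ} (ht : ∀ i ∈ t, 1 ≤ c i) (hs : ∀ i ∈ s, 2 ≤ c i) :
    #t + #s ≤ ∑ i ∈ t, c i := by
  have h₁ : #(t \ s) * 1 ≤ ∑ i ∈ t \ s, c i :=
    card_nsmul_le_sum (t \ s) c 1 fun i hi => ht i (mem_sdiff.mp hi).1
  have h₂ : #s * 2 ≤ ∑ i ∈ s, c i := card_nsmul_le_sum s c 2 hs
  have h₃ := card_sdiff_add_card_eq_card hst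
  rw [← sum_sdiff hst]
  omega

section SequenceColouring

lemma edge_eq_of_mem_of_mem {G : SimpleGraph V} {u v : V} (huv : u ≠ v) {e f : G.edgeSet}
    (he : (e : Sym2 V) = s(u, v)) (hu : u ∈ (f : Sym2 V)) (hv : v ∈ (f : Sym2 V)) : f = e :=
  Subtype.ext <| he ▸ (Sym2.mem_and_mem_iff huv).mp ⟨hu, hv⟩

lemma exists_eq_mk {G : SimpleGraph V} (e : G.edgeSet) :
    ∃ u v, (e : Sym2 V) = s(u, v) ∧ G.Adj u v := by
  obtain ⟨e, he⟩ := e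
  induction e using Sym2.ind with
  | _ u v => exact ⟨u, v, rfl, he⟩

lemma eq_or_adj_of_mem {G : SimpleGraph V} {f : G.edgeSet} {y z : V} (hy : y ∈ (f : Sym2 V))
    (hz : z ∈ (f : Sym2 V)) :
    y = z ∨ G.Adj z y := by
  by_cases hyz : y = z
  · exact .inl hyz
  · exact .inr <| G.mem_edgeSet.mp ((Sym2.mem_and_mem_iff (Ne.symm hyz)).mp ⟨hz, hy⟩ ▸ f.2)

variable [Fintype V] [DecidableEq V] (G : SimpleGraph V) [DecidableRel G.Adj]

def edgesAt (v : V) : Finset G.edgeSet := {e | v ∈ (e : Sym2 V)}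

@[simp]
lemma mem_edgesAt {v : V} {e : G.edgeSet} : e ∈ edgesAt G v ↔ v ∈ (e : Sym2 V) := by
  simp [edgesAt]

lemma card_edgesAt (v : V) : #(edgesAt G v) = G.degree v := by
  rw [← G.card_incidenceFinset_eq_degree]
  refine card_bij (fun e _ => (e : Sym2 V)) (fun e he => ?_) (fun _ _ _ _ => Subtype.ext)
    fun e he => ?_
  · exact (G.mem_incidenceFinset _ _).mpr ⟨e.2, (mem_edgesAt G).mp he⟩
  · obtain ⟨he, hv⟩ := (G.mem_incidenceFinset _ _).mp he
    exact ⟨⟨e, he⟩, (mem_edgesAt G).mpr hv, rfl⟩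

def edgesMeeting (e : G.edgeSet) : Finset G.edgeSet :=
  {f | ∃ z ∈ (e : Sym2 V), z ∈ (f : Sym2 V)}

lemma mem_neighborFinset_union {e : G.edgeSet} {u v z y : V} (he : (e : Sym2 V) = s(u, v))
    (huv : G.Adj u v) (hz : z ∈ (e : Sym2 V)) (hy : y = z ∨ G.Adj z y) :
    y ∈ G.neighborFinset u ∪ G.neighborFinset v := by
  rw [he, Sym2.mem_iff] at hz
  rcases hz with rfl | rfl <;> rcases hy with rfl | hy <;> simp_all [huv.symm]

lemma exists_mem_neighborFinset_union_of_not_disjoint {e f : G.edgeSet} {u v : V}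
    (he : (e : Sym2 V) = s(u, v)) (huv : G.Adj u v)
    (h : ¬ Disjoint (edgesMeeting G f) (edgesMeeting G e)) :
    ∃ y ∈ G.neighborFinset u ∪ G.neighborFinset v, y ∈ (f : Sym2 V) := by
  obtain ⟨g, hgf, hge⟩ := not_disjoint_iff.mp h
  simp only [edgesMeeting, mem_filter, mem_univ, true_and] at hgf hge
  obtain ⟨y, hyf, hyg⟩ := hgf
  obtain ⟨z, hze, hzg⟩ := hge
  exact ⟨y, mem_neighborFinset_union G he huv hze (eq_or_adj_of_mem hyg hzg), hyf⟩

lemma mem_neighborFinset_union_of_mem_edgesAt {e f : G.edgeSet} {u v y : V}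
    (he : (e : Sym2 V) = s(u, v)) (huv : G.Adj u v) (hf : f ∈ edgesAt G u ∪ edgesAt G v)
    (hy : y ∈ (f : Sym2 V)) : y ∈ G.neighborFinset u ∪ G.neighborFinset v := by
  rcases mem_union.mp hf with h | h
  · exact mem_neighborFinset_union G he huv (he ▸ Sym2.mem_mk_left u v)
      (eq_or_adj_of_mem hy ((mem_edgesAt G).mp h))
  · exact mem_neighborFinset_union G he huv (he ▸ Sym2.mem_mk_right u v)
      (eq_or_adj_of_mem hy ((mem_edgesAt G).mp h))

lemma card_edgesAt_union_add_one {e : G.edgeSet} {u v : V} (he : (e : Sym2 V) = s(u, v))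
    (huv : G.Adj u v) : #(edgesAt G u ∪ edgesAt G v) + 1 = G.degree u + G.degree v := by
  have hinter : edgesAt G u ∩ edgesAt G v = {e} := by
    ext f
    simp only [mem_inter, mem_edgesAt, mem_singleton]
    exact ⟨fun h => edge_eq_of_mem_of_mem huv.ne he h.1 h.2,
      fun h => h ▸ he ▸ ⟨Sym2.mem_mk_left u v, Sym2.mem_mk_right u v⟩⟩
  rw [← card_edgesAt, ← card_edgesAt, ← card_union_add_card_inter, hinter, card_singleton]

lemma sum_card_filter_mem_le (s : Finset G.edgeSet) (N : Finset V) :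
    ∑ f ∈ s, #{z ∈ N | z ∈ (f : Sym2 V)} ≤ #N * G.maxDegree := by
  calc ∑ f ∈ s, #{z ∈ N | z ∈ (f : Sym2 V)}
        = ∑ z ∈ N, #{f ∈ s | z ∈ ((f : G.edgeSet) : Sym2 V)} := by
        simp only [card_filter]
        exact sum_comm
    _ ≤ ∑ z ∈ N, G.maxDegree := sum_le_sum fun z _ =>
        ((card_le_card fun f hf => (mem_edgesAt G).mpr (mem_filter.mp hf).2).trans
          (card_edgesAt G z).le).trans (G.degree_le_maxDegree z)
    _ = #N * G.maxDegree := by rw [sum_const, smul_eq_mul]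

/-- Every edge meeting an edge that meets `uv` has an endpoint in `N(u) ∪ N(v)`, and the edges at
`u` or `v` have both endpoints there: double count incidences with `N(u) ∪ N(v)`. -/
lemma card_filter_not_disjoint_add_le (e : G.edgeSet) {u v : V} (he : (e : Sym2 V) = s(u, v))
    (huv : G.Adj u v) :
    #{f | ¬ Disjoint (edgesMeeting G f) (edgesMeeting G e)} + (G.degree u + G.degree v)
      ≤ 2 * G.maxDegree ^ 2 + 1 := by
  set N := G.neighborFinset u ∪ G.neighborFinset v
  set Ne : Finset G.edgeSet := {f | ¬ Disjoint (edgesMeeting G f) (edgesMeeting G e)}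
  have hstars : edgesAt G u ∪ edgesAt G v ⊆ Ne := by
    intro f hf
    obtain ⟨a, b, hab, -⟩ := exists_eq_mk f
    refine mem_filter.mpr ⟨mem_univ f, not_disjoint_iff.mpr ⟨f, ?_, ?_⟩⟩
    · simpa [edgesMeeting] using ⟨a, hab ▸ Sym2.mem_mk_left a b⟩
    · rcases mem_union.mp hf with h | h <;> simp only [edgesMeeting, mem_filter, mem_univ,
        true_and]
      exacts [⟨u, he ▸ Sym2.mem_mk_left u v, (mem_edgesAt G).mp h⟩,
        ⟨v, he ▸ Sym2.mem_mk_right u v, (mem_edgesAt G).mp h⟩]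
  have hone : ∀ f ∈ Ne, 1 ≤ #{z ∈ N | z ∈ (f : Sym2 V)} := fun f hf => by
    obtain ⟨y, hyN, hyf⟩ :=
      exists_mem_neighborFinset_union_of_not_disjoint G he huv (mem_filter.mp hf).2
    exact card_pos.mpr ⟨y, mem_filter.mpr ⟨hyN, hyf⟩⟩
  have htwo : ∀ f ∈ edgesAt G u ∪ edgesAt G v, 2 ≤ #{z ∈ N | z ∈ (f : Sym2 V)} := by
    intro f hf
    obtain ⟨a, b, hab, hadj⟩ := exists_eq_mk f
    have hN : ∀ y ∈ (f : Sym2 V), y ∈ {z ∈ N | z ∈ (f : Sym2 V)} := fun y hy =>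
      mem_filter.mpr ⟨mem_neighborFinset_union_of_mem_edgesAt G he huv hf hy, hy⟩
    calc 2 = #{a, b} := (card_pair hadj.ne).symm
      _ ≤ _ := card_le_card <| insert_subset (hN a (hab ▸ Sym2.mem_mk_left a b))
          (singleton_subset_iff.mpr (hN b (hab ▸ Sym2.mem_mk_right a b)))
  have hN : #N ≤ G.degree u + G.degree v := by
    rw [← G.card_neighborFinset_eq_degree, ← G.card_neighborFinset_eq_degree]
    exact card_union_le _ _
  have := card_add_card_le_sum hstars hone htwo
  have := sum_card_filter_mem_le G Ne N
  have := card_edgesAt_union_add_one G he huv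
  have := G.degree_le_maxDegree u
  have := G.degree_le_maxDegree v
  nlinarith

lemma card_dependent_le (e : G.edgeSet) :
    #{f | f ≠ e ∧ ¬ Disjoint (edgesMeeting G f) (edgesMeeting G e)}
      ≤ 2 * G.maxDegree ^ 2 - 2 * G.minDegree := by
  obtain ⟨u, v, he, huv⟩ := exists_eq_mk e
  have hbound := card_filter_not_disjoint_add_le G e he huv
  have hu := G.minDegree_le_degree u
  have hv := G.minDegree_le_degree v
  set Ne : Finset G.edgeSet := {f | ¬ Disjoint (edgesMeeting G f) (edgesMeeting G e)}
  have hself : e ∈ edgesMeeting G e := by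
    simpa [edgesMeeting] using ⟨u, he ▸ Sym2.mem_mk_left u v⟩
  have hmem : e ∈ Ne :=
    mem_filter.mpr ⟨mem_univ e, not_disjoint_iff.mpr ⟨e, hself, hself⟩⟩
  have herase : ({f | f ≠ e ∧ ¬ Disjoint (edgesMeeting G f) (edgesMeeting G e)} : Finset _)
      = Ne.erase e := by
    ext f
    simp [Ne]
  have := card_pos.mpr ⟨e, hmem⟩
  rw [herase, card_erase_of_mem hmem]
  omega

variable (σ : LinearOrder G.edgeSet)

lemma incEdges_length (v : V) : (incEdges G σ v).length = G.degree v := by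
  rw [incEdges, length_sort, ← card_edgesAt]
  rfl

lemma incEdges_nodup (v : V) : (incEdges G σ v).Nodup :=
  sort_nodup _ _

@[simp]
lemma mem_incEdges {v : V} {e : G.edgeSet} : e ∈ incEdges G σ v ↔ v ∈ (e : Sym2 V) := by
  simp [incEdges]

lemma seqColor_length {α : Type*} (w : G.edgeSet → α) (v : V) :
    (seqColor G σ w v).length = G.degree v := by
  rw [seqColor, List.length_map, incEdges_length]

lemma seqColor_congr {α : Type*} {w w' : G.edgeSet → α} {v : V}
    (h : ∀ e ∈ edgesAt G v, w e = w' e) : seqColor G σ w v = seqColor G σ w' v :=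
  List.map_congr_left fun e he => h e ((mem_edgesAt G).mpr ((mem_incEdges G σ).mp he))

def endsAgree (e : G.edgeSet) (w : G.edgeSet → ℝ) : Prop :=
  ∃ u v, (e : Sym2 V) = s(u, v) ∧ seqColor G σ w u = seqColor G σ w v

lemma endsAgree_iff {e : G.edgeSet} {u v : V} (he : (e : Sym2 V) = s(u, v))
    {w : G.edgeSet → ℝ} : endsAgree G σ e w ↔ seqColor G σ w u = seqColor G σ w v := by
  refine ⟨fun ⟨u', v', he', h⟩ => ?_, fun h => ⟨u, v, he, h⟩⟩
  rcases Sym2.eq_iff.mp (he'.symm.trans he) with ⟨rfl, rfl⟩ | ⟨rfl, rfl⟩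
  exacts [h, h.symm]

lemma dependsOn_endsAgree (e : G.edgeSet) :
    DependsOn (endsAgree G σ e) (edgesMeeting G e) := by
  intro w w' h
  obtain ⟨u, v, he, -⟩ := exists_eq_mk e
  have hw : ∀ z ∈ (e : Sym2 V), seqColor G σ w z = seqColor G σ w' z := fun z hz =>
    seqColor_congr G σ fun f hf => h f <| by
      simpa [edgesMeeting] using ⟨z, hz, (mem_edgesAt G).mp hf⟩
  rw [endsAgree_iff G σ he, endsAgree_iff G σ he, hw u (he ▸ Sym2.mem_mk_left u v),
    hw v (he ▸ Sym2.mem_mk_right u v)]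

noncomputable instance (e : G.edgeSet) : DecidablePred (endsAgree G σ e) := fun _ => by
  unfold endsAgree
  infer_instance

lemma getD_incEdges_mem {v : V} {k : ℕ} (hk : k < G.degree v) (d : G.edgeSet) :
    v ∈ ((incEdges G σ v).getD k d : Sym2 V) := by
  rw [List.getD_eq_getElem _ _ (by rwa [incEdges_length])]
  exact (mem_incEdges G σ).mp (List.getElem_mem _)

lemma getD_incEdges_injOn (v : V) (d : G.edgeSet) :
    Set.InjOn (fun k => (incEdges G σ v).getD k d) (range (G.degree v)) := by
  intro k hk k' hk' h
  simp only [coe_range, Set.mem_Iio, ← incEdges_length G σ v] at hk hk'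
  simp only [List.getD_eq_getElem _ _ hk, List.getD_eq_getElem _ _ hk'] at h
  exact (incEdges_nodup G σ v).getElem_inj_iff.mp h

lemma getD_incEdges_idxOf {v : V} {e : G.edgeSet} (hv : v ∈ (e : Sym2 V)) :
    (incEdges G σ v).getD ((incEdges G σ v).idxOf e) e = e := by
  rw [List.getD_eq_getElem _ _ (List.idxOf_lt_length_iff.mpr ((mem_incEdges G σ).mpr hv))]
  exact List.getElem_idxOf _

/-- The `k`-th edge at `v` can only be an edge at `u` if it is `uv` itself. -/
lemma getD_incEdges_ne {e : G.edgeSet} {u v : V} (he : (e : Sym2 V) = s(u, v)) (huv : G.Adj u v)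
    {k k' : ℕ} (hk : k < G.degree v) (hkj : k ≠ (incEdges G σ v).idxOf e)
    (hk' : k' < G.degree u) : (incEdges G σ v).getD k e ≠ (incEdges G σ u).getD k' e := by
  intro h
  have hv : v ∈ (e : Sym2 V) := he ▸ Sym2.mem_mk_right u v
  have hj : (incEdges G σ v).idxOf e < G.degree v := by
    rw [← incEdges_length G σ v]
    exact List.idxOf_lt_length_iff.mpr ((mem_incEdges G σ).mpr hv)
  have hke := edge_eq_of_mem_of_mem huv.ne he (h ▸ getD_incEdges_mem G σ hk' e)
    (getD_incEdges_mem G σ hk e)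
  exact hkj <| getD_incEdges_injOn G σ v e (by simpa using hk) (by simpa using hj)
    (hke.trans (getD_incEdges_idxOf G σ hv).symm)

lemma apply_getD_eq_of_endsAgree {e : G.edgeSet} {u v : V} (he : (e : Sym2 V) = s(u, v))
    {w : G.edgeSet → ℝ} (hw : endsAgree G σ e w) {k : ℕ} (hk : k < G.degree u)
    (d : G.edgeSet) :
    w ((incEdges G σ u).getD k d) = w ((incEdges G σ v).getD k d) := by
  have h := (endsAgree_iff G σ he).mp hw
  have hku : k < (incEdges G σ u).length := by rwa [incEdges_length]
  have hkv : k < (incEdges G σ v).length := by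
    have := congrArg List.length h
    rw [seqColor_length, seqColor_length] at this
    rwa [incEdges_length, ← this]
  rw [List.getD_eq_getElem _ _ hku, List.getD_eq_getElem _ _ hkv]
  simpa [seqColor] using List.getElem_of_eq h (by simpa [seqColor] using hku)

/-- Away from the position of `uv` in the list at `v`, equality of the `k`-th edge weights at `u`
and at `v` gives `deg u - 1` constraints of the shape counted by
`card_filter_forall_eq_mul_prod_le`. -/
lemma card_filter_endsAgree_mul_le (L : G.edgeSet → Finset ℝ) {m : ℕ} (hL : ∀ e, #(L e) = m)
    (e : G.edgeSet) :
    #{w ∈ piFinset L | endsAgree G σ e w} * m ^ (G.minDegree - 1) ≤ #(piFinset L) := by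
  rcases m.eq_zero_or_pos with rfl | hm
  · simp [piFinset_eq_empty.mpr ⟨e, card_eq_zero.mp (hL e)⟩]
  obtain ⟨u, v, he, huv⟩ := exists_eq_mk e
  by_cases hdeg : G.degree u = G.degree v
  swap
  · have : {w ∈ piFinset L | endsAgree G σ e w} = ∅ :=
      filter_false_of_mem fun w _ h => hdeg <| by
        simpa [seqColor_length] using congrArg List.length ((endsAgree_iff G σ he).mp h)
    simp [this]
  set j := (incEdges G σ v).idxOf e
  set K := (range (G.degree u)).erase j
  have hK : ∀ k ∈ K, k < G.degree u ∧ k ≠ j := fun k hk =>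
    ⟨mem_range.mp (mem_of_mem_erase hk), ne_of_mem_erase hk⟩
  have hj : j < G.degree u := hdeg ▸ incEdges_length G σ v ▸
    List.idxOf_lt_length_iff.mpr ((mem_incEdges G σ).mpr (he ▸ Sym2.mem_mk_right u v))
  have hsub : {w ∈ piFinset L | endsAgree G σ e w} ⊆ {w ∈ piFinset L |
      ∀ k ∈ K, w ((incEdges G σ u).getD k e) = w ((incEdges G σ v).getD k e)} :=
    monotone_filter_right _ fun w _ hw k hk =>
      apply_getD_eq_of_endsAgree G σ he hw (hK k hk).1 e
  have hprod : m ^ (G.minDegree - 1) ≤ ∏ k ∈ K, #(L ((incEdges G σ u).getD k e)) := by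
    calc m ^ (G.minDegree - 1) ≤ m ^ #K := by
          rw [card_erase_of_mem (mem_range.mpr hj), card_range]
          exact Nat.pow_le_pow_right hm (Nat.sub_le_sub_right (G.minDegree_le_degree u) 1)
      _ = ∏ k ∈ K, #(L ((incEdges G σ u).getD k e)) := by simp [hL]
  calc #{w ∈ piFinset L | endsAgree G σ e w} * m ^ (G.minDegree - 1)
      ≤ #{w ∈ piFinset L |
          ∀ k ∈ K, w ((incEdges G σ u).getD k e) = w ((incEdges G σ v).getD k e)} *
        ∏ k ∈ K, #(L ((incEdges G σ u).getD k e)) :=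
        Nat.mul_le_mul (card_le_card hsub) hprod
    _ ≤ #(piFinset L) := card_filter_forall_eq_mul_prod_le L K _ _
        ((getD_incEdges_injOn G σ u e).mono (coe_subset.mpr (erase_subset j _)))
        fun k hk k' hk' =>
          getD_incEdges_ne G σ he huv (hdeg ▸ (hK k hk).1) (hK k hk).2 (hK k' hk').1

end SequenceColouring

lemma one_le_two_mul_sq_sub_two_mul_add_one (n : ℕ) :
    (1 : ℝ) ≤ 2 * (n : ℝ) ^ 2 - 2 * n + 1 := by
  have : (n : ℝ) ≤ n ^ 2 := by exact_mod_cast Nat.le_self_pow two_ne_zero n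
  linarith

lemma three_le_of_logb_lt {δ Δ : ℕ}
    (h : Real.logb 3 (2 * (Δ : ℝ) ^ 2 - 2 * Δ + 1) + 2 < δ) : 3 ≤ δ := by
  have := Real.logb_nonneg (b := 3) (by norm_num) (one_le_two_mul_sq_sub_two_mul_add_one Δ)
  exact_mod_cast (show (2 : ℝ) < δ by linarith)

lemma exp_one_mul_le_three_pow_of_logb_lt {δ Δ : ℕ}
    (h : Real.logb 3 (2 * (Δ : ℝ) ^ 2 - 2 * Δ + 1) + 2 < δ) :
    Real.exp 1 * (2 * (Δ : ℝ) ^ 2 - 2 * δ + 1) ≤ 3 ^ (δ - 1) := by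
  have hδ := three_le_of_logb_lt h
  have hpow : 3 * (2 * (Δ : ℝ) ^ 2 - 2 * Δ + 1) < 3 ^ (δ - 1) := by
    have h' := (Real.logb_lt_iff_lt_rpow (by norm_num)
      (by linarith [one_le_two_mul_sq_sub_two_mul_add_one Δ])).mp (lt_sub_iff_add_lt.mpr h)
    rw [show (δ : ℝ) - 2 = (δ - 2 : ℕ) by rw [Nat.cast_sub (by omega)]; norm_num,
      Real.rpow_natCast] at h'
    rw [show δ - 1 = δ - 2 + 1 by omega, pow_succ (3 : ℝ) (δ - 2)]
    linarith
  have hδ' : (3 : ℝ) ≤ δ := by exact_mod_cast hδ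
  -- `(6 - 2e)Δ² - 6Δ + 2eδ + 3 - e > 0` for `δ ≥ 3`: its discriminant in `Δ` is negative.
  rcases le_or_gt 0 (2 * (Δ : ℝ) ^ 2 - 2 * δ + 1) with hX | hX
  · nlinarith [mul_le_mul_of_nonneg_right Real.exp_one_lt_d9.le hX,
      sq_nonneg ((Δ : ℝ) - 16 / 3), Nat.cast_nonneg (α := ℝ) Δ]
  · nlinarith [Real.exp_pos 1, pow_pos (three_pos (α := ℝ)) (δ - 1)]

/-- If `δ(G) > log₃(2Δ(G)² − 2Δ(G) + 1) + 2` then `ch_σ^e(G) ≤ 3`. -/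
theorem stmt_6 [Fintype V] [DecidableEq V] (G : SimpleGraph V) [DecidableRel G.Adj]
    (hδ : Real.logb 3 (2 * (G.maxDegree : ℝ) ^ 2 - 2 * (G.maxDegree : ℝ) + 1) + 2
      < (G.minDegree : ℝ))
    (σ : LinearOrder G.edgeSet)
    (L : G.edgeSet → Finset ℝ) (hL : ∀ e, (L e).card = 3) :
    ∃ w : G.edgeSet → ℝ, (∀ e, w e ∈ L e) ∧ ProperSeq G σ w := by
  have hδ3 := three_le_of_logb_lt hδ
  have hD : 0 < 2 * G.maxDegree ^ 2 - 2 * G.minDegree := by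
    have := G.minDegree_le_maxDegree
    have : G.minDegree < G.maxDegree ^ 2 := by nlinarith
    omega
  have hp : ∀ e, Real.exp 1 * ((2 * G.maxDegree ^ 2 - 2 * G.minDegree : ℕ) + 1)
      * #{w ∈ piFinset L | endsAgree G σ e w} ≤ #(piFinset L) := fun e => by
    have hcount : (#{w ∈ piFinset L | endsAgree G σ e w} : ℝ) * 3 ^ (G.minDegree - 1)
        ≤ #(piFinset L) := by
      exact_mod_cast card_filter_endsAgree_mul_le G σ L hL e
    have hexp := exp_one_mul_le_three_pow_of_logb_lt hδ
    rw [Nat.cast_sub (by omega)]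
    push_cast
    nlinarith
  obtain ⟨w, hw, hgood⟩ := LocalLemma.exists_forall_not_of_symmetric L (edgesMeeting G)
    (dependsOn_endsAgree G σ) hD (card_dependent_le G) hp
    (fun e => card_pos.mp (by rw [hL e]; norm_num))
  exact ⟨w, mem_piFinset.mp hw, fun u v huv h => hgood ⟨s(u, v), huv⟩ ⟨u, v, rfl, h⟩⟩
end

section
/- If G is a d-regular finite simple graph with d ≥ 9, then ch_σ^t(G) ≤ 2: for every linear order on the disjoint union V(G) ∪ E(G) and every assignment to each vertex and each edge of a set of two real numbers, there exists a total weighting taking each weight from its assigned set whose induced total sequence colouring of the vertices is proper. -/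
/-!
Common definitions: total sequence colourings induced by a total weighting and a linear
order on the disjoint union `V(G) ⊕ E(G)` of a finite simple graph.
-/

open Finset

variable {V : Type*}

/-- The elements of `V(G) ⊕ E(G)` relevant to the vertex `v` (namely `v` itself together
with the edges incident to `v`), sorted in increasing order with respect to the linear
order `σ` on `V(G) ⊕ E(G)`. -/
noncomputable def incTotal [Fintype V] [DecidableEq V] (G : SimpleGraph V) [DecidableRel G.Adj]
    (σ : LinearOrder (V ⊕ G.edgeSet)) (v : V) : List (V ⊕ G.edgeSet) :=
  letI := σ
  letI : DecidablePred (fun x : V ⊕ G.edgeSet =>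
      Sum.elim (fun u : V => u = v) (fun e : G.edgeSet => v ∈ (e : Sym2 V)) x) :=
    Classical.decPred _
  ((Finset.univ : Finset (V ⊕ G.edgeSet)).filter
    (fun x : V ⊕ G.edgeSet =>
      Sum.elim (fun u : V => u = v) (fun e : G.edgeSet => v ∈ (e : Sym2 V)) x)).sort σ.le

/-- The induced total sequence colouring: `c(v)` consists of `w(v)` together with the
weights `w(e)` of the edges `e` incident to `v`, all written in increasing order with
respect to `σ`. -/
noncomputable def totalSeqColor [Fintype V] [DecidableEq V] (G : SimpleGraph V)
    [DecidableRel G.Adj] (σ : LinearOrder (V ⊕ G.edgeSet)) (w : V ⊕ G.edgeSet → ℝ) (v : V) :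
    List ℝ :=
  (incTotal G σ v).map w

/-- The induced total sequence colouring is proper: adjacent vertices receive distinct
sequences. -/
def ProperTotalSeq [Fintype V] [DecidableEq V] (G : SimpleGraph V) [DecidableRel G.Adj]
    (σ : LinearOrder (V ⊕ G.edgeSet)) (w : V ⊕ G.edgeSet → ℝ) : Prop :=
  ∀ u v : V, G.Adj u v → totalSeqColor G σ w u ≠ totalSeqColor G σ w v

/-!
Choose the weight of every element of `V ⊕ E` independently and uniformly from its list. For an
edge `uv` the sequences `c(u)` and `c(v)` share only the entry of `uv`; once the weights around
`u` are fixed, the event `c(u) = c(v)` pins down the `d` other weights around `v`, so it has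
probability at most `2⁻ᵈ`. It only reads weights of elements incident to `u` or `v`, so it is
mutually independent of the events of all edges not meeting `N(u) ∪ N(v)`, leaving at most `2d²`
dependent events. With `x = 1 / (2d² + 1)` the Lovász Local Lemma applies as soon as
`e (2d² + 1) ≤ 2ᵈ`, which holds for `d ≥ 9`. The local lemma itself is proved by counting in the
cube `X → Bool`, through the usual induction bounding the proportion of `Bᵢ` among the
outcomes avoiding any set of other events by `x`.
-/

section Cube
variable {X : Type*} [Fintype X] [DecidableEq X]

lemma card_inter_mul_two_pow_eq {s : Finset X} {B A : Finset (X → Bool)}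
    (hB : DependsOn (· ∈ B) (s : Set X)) (hA : DependsOn (· ∈ A) (s : Set X)ᶜ) :
    #(B ∩ A) * 2 ^ Fintype.card X = #B * #A := by
  -- exchanging the two coordinates on `s` is an involution of `(X → Bool) × (X → Bool)`
  let swap (p : (X → Bool) × (X → Bool)) := (s.piecewise p.1 p.2, s.piecewise p.2 p.1)
  have swap_swap : ∀ p, swap (swap p) = p := fun p => by
    ext x <;> by_cases hx : x ∈ s <;> simp [swap, hx]
  have agree_on (f g : X → Bool) : ∀ x ∈ (s : Set X), s.piecewise f g x = f x :=
    fun x hx => s.piecewise_eq_of_mem _ _ hx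
  have agree_off (f g : X → Bool) : ∀ x ∈ (s : Set X)ᶜ, s.piecewise g f x = f x :=
    fun x hx => s.piecewise_eq_of_notMem _ _ hx
  calc #(B ∩ A) * 2 ^ Fintype.card X = #((B ∩ A) ×ˢ (univ : Finset (X → Bool))) := by
        simp [card_product]
    _ = #(B ×ˢ A) := by
        refine card_nbij' swap swap ?_ ?_ (fun p _ => swap_swap p) (fun p _ => swap_swap p)
        · rintro ⟨f, g⟩ hp
          simp only [coe_product, Set.mem_prod, mem_coe, mem_inter] at hp ⊢
          exact ⟨(hB (agree_on f g)).mpr hp.1.1, (hA (agree_off f g)).mpr hp.1.2⟩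
        · rintro ⟨f, g⟩ hp
          simp only [coe_product, Set.mem_prod, mem_coe, mem_inter, mem_univ, and_true] at hp ⊢
          exact ⟨(hB (agree_on f g)).mpr hp.1, (hA (agree_off g f)).mpr hp.2⟩
    _ = #B * #A := card_product _ _

lemma card_mul_two_pow_card_le {E : Finset (X → Bool)} {T : Finset X}
    (hE : ∀ f ∈ E, ∀ g ∈ E, (∀ x ∉ T, f x = g x) → f = g) :
    #E * 2 ^ #T ≤ 2 ^ Fintype.card X := by
  let overwrite (p : (X → Bool) × (T → Bool)) (x : X) : Bool :=
    if h : x ∈ T then p.2 ⟨x, h⟩ else p.1 x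
  have hinj : Set.InjOn overwrite ↑(E ×ˢ (univ : Finset (T → Bool))) := by
    rintro ⟨f, b⟩ hf ⟨g, c⟩ hg hfg
    simp only [coe_product, Set.mem_prod, mem_coe, mem_univ, and_true] at hf hg
    have hoff : ∀ x ∉ T, f x = g x := fun x hx => by simpa [overwrite, hx] using congrFun hfg x
    refine Prod.ext (hE f hf g hg hoff) (funext fun x => ?_)
    simpa [overwrite, x.2] using congrFun hfg x
  calc #E * 2 ^ #T = #(E ×ˢ (univ : Finset (T → Bool))) := by
        simp [card_product]
    _ ≤ #(univ : Finset (X → Bool)) :=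
        card_le_card_of_injOn overwrite (fun _ _ => mem_coe.mpr (mem_univ _)) hinj
    _ = 2 ^ Fintype.card X := by simp

end Cube

section LocalLemma
variable {X ι : Type*} [Fintype X] [DecidableEq X]

def avoiding (Bad : ι → Finset (X → Bool)) (S : Finset ι) : Finset (X → Bool) :=
  {f | ∀ j ∈ S, f ∉ Bad j}

variable {Bad : ι → Finset (X → Bool)}

lemma mem_avoiding {S : Finset ι} {f : X → Bool} : f ∈ avoiding Bad S ↔ ∀ j ∈ S, f ∉ Bad j := by
  simp [avoiding]

@[simp] lemma avoiding_empty : avoiding Bad ∅ = univ := by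
  ext f; simp [mem_avoiding]

lemma avoiding_anti {S T : Finset ι} (h : S ⊆ T) : avoiding Bad T ⊆ avoiding Bad S :=
  fun _ hf => mem_avoiding.mpr fun j hj => mem_avoiding.mp hf j (h hj)

lemma dependsOn_mem_avoiding {S : Finset ι} {t : Set X}
    (h : ∀ j ∈ S, DependsOn (· ∈ Bad j) t) : DependsOn (· ∈ avoiding Bad S) t := by
  intro f g hfg
  simp only [mem_avoiding, eq_iff_iff]
  exact forall₂_congr fun j hj => not_congr (h j hj hfg).to_iff

variable [DecidableEq ι]

lemma avoiding_insert (j : ι) (S : Finset ι) :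
    avoiding Bad (insert j S) = avoiding Bad S \ Bad j := by
  ext f; simp [mem_avoiding, and_comm]

lemma one_sub_mul_card_avoiding_le_card_avoiding_insert {x : ℝ} {j : ι} {S : Finset ι}
    (h : (#(Bad j ∩ avoiding Bad S) : ℝ) ≤ x * #(avoiding Bad S)) :
    (1 - x) * #(avoiding Bad S) ≤ #(avoiding Bad (insert j S)) := by
  have hsplit : (#(avoiding Bad S \ Bad j) : ℝ) + #(avoiding Bad S ∩ Bad j)
      = #(avoiding Bad S) := by
    exact_mod_cast card_sdiff_add_card_inter (avoiding Bad S) (Bad j)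
  rw [avoiding_insert]
  rw [inter_comm] at h
  linarith

lemma one_sub_pow_mul_card_avoiding_le {x : ℝ} (hx : x ≤ 1) {S T : Finset ι}
    (hST : Disjoint S T) (hok : ∀ W ⊂ S ∪ T, ∀ i ∉ W,
      (#(Bad i ∩ avoiding Bad W) : ℝ) ≤ x * #(avoiding Bad W)) :
    (1 - x) ^ #T * #(avoiding Bad S) ≤ #(avoiding Bad (S ∪ T)) := by
  induction T using Finset.induction_on with
  | empty => simp
  | insert j T hjT ih =>
    have hjS : j ∉ S := fun h => disjoint_left.mp hST h (mem_insert_self j T)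
    have hjST : j ∉ S ∪ T := by simp [hjS, hjT]
    rw [union_insert] at hok ⊢
    have hsub : S ∪ T ⊂ insert j (S ∪ T) := ssubset_insert hjST
    have ih := ih (disjoint_of_subset_right (subset_insert j T) hST)
      fun W hW => hok W (hW.trans hsub)
    calc (1 - x) ^ #(insert j T) * #(avoiding Bad S)
        = (1 - x) * ((1 - x) ^ #T * #(avoiding Bad S)) := by
          rw [card_insert_of_notMem hjT]; ring
      _ ≤ (1 - x) * #(avoiding Bad (S ∪ T)) :=
          mul_le_mul_of_nonneg_left ih (by linarith)
      _ ≤ #(avoiding Bad (insert j (S ∪ T))) :=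
          one_sub_mul_card_avoiding_le_card_avoiding_insert (hok _ hsub j hjST)

variable {vars : ι → Finset X} {Γ : ι → Finset ι} {D : ℕ} {x : ℝ}

lemma card_inter_avoiding_le (hx₀ : 0 ≤ x) (hx₁ : x ≤ 1)
    (hvars : ∀ i, DependsOn (· ∈ Bad i) (vars i : Set X))
    (hΓ : ∀ i j, j ≠ i → j ∉ Γ i → Disjoint (vars i) (vars j)) (hD : ∀ i, #(Γ i) ≤ D)
    (hp : ∀ i, (#(Bad i) : ℝ) ≤ x * (1 - x) ^ D * 2 ^ Fintype.card X)
    (S : Finset ι) : ∀ i ∉ S, (#(Bad i ∩ avoiding Bad S) : ℝ) ≤ x * #(avoiding Bad S) := by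
  induction S using Finset.strongInduction with
  | H S ih =>
    intro i hi
    set S₁ := S ∩ Γ i
    set S₂ := S \ Γ i
    have hindep : (#(Bad i ∩ avoiding Bad S₂) : ℝ) * 2 ^ Fintype.card X
        = #(Bad i) * #(avoiding Bad S₂) := by
      have hS₂ : DependsOn (· ∈ avoiding Bad S₂) (vars i : Set X)ᶜ :=
        dependsOn_mem_avoiding fun j hj => (hvars j).mono fun y hy hyi => by
          obtain ⟨hjS, hjΓ⟩ := mem_sdiff.mp hj
          exact disjoint_left.mp (hΓ i j (fun h => hi (h ▸ hjS)) hjΓ) hyi hy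
      exact_mod_cast card_inter_mul_two_pow_eq (hvars i) hS₂
    have hpeel : (1 - x) ^ #S₁ * #(avoiding Bad S₂) ≤ #(avoiding Bad S) := by
      have := one_sub_pow_mul_card_avoiding_le hx₁ (disjoint_sdiff_inter S (Γ i))
        fun W hW => ih W (by rwa [sdiff_union_inter] at hW)
      rwa [sdiff_union_inter] at this
    have hS₁ : #S₁ ≤ D := (card_le_card inter_subset_right).trans (hD i)
    calc (#(Bad i ∩ avoiding Bad S) : ℝ)
        ≤ #(Bad i ∩ avoiding Bad S₂) := by
          exact_mod_cast card_le_card (inter_subset_inter_left (avoiding_anti sdiff_subset))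
      _ = #(Bad i) * #(avoiding Bad S₂) / 2 ^ Fintype.card X := by
          rw [← hindep, mul_div_cancel_right₀ _ (by positivity)]
      _ ≤ x * (1 - x) ^ D * #(avoiding Bad S₂) := by
          rw [div_le_iff₀ (by positivity)]
          nlinarith [hp i, (by positivity : (0 : ℝ) ≤ #(avoiding Bad S₂))]
      _ ≤ x * ((1 - x) ^ #S₁ * #(avoiding Bad S₂)) := by
          rw [mul_assoc]
          have h1x : 0 ≤ 1 - x := by linarith
          gcongr ?_ * (?_ * _)
          exact pow_le_pow_of_le_one h1x (by linarith) hS₁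
      _ ≤ x * #(avoiding Bad S) := by gcongr

theorem lovasz_local_lemma [Fintype ι] (hx₀ : 0 ≤ x) (hx₁ : x < 1)
    (hvars : ∀ i, DependsOn (· ∈ Bad i) (vars i : Set X))
    (hΓ : ∀ i j, j ≠ i → j ∉ Γ i → Disjoint (vars i) (vars j)) (hD : ∀ i, #(Γ i) ≤ D)
    (hp : ∀ i, (#(Bad i) : ℝ) ≤ x * (1 - x) ^ D * 2 ^ Fintype.card X) :
    ∃ f : X → Bool, ∀ i, f ∉ Bad i := by
  have hall := one_sub_pow_mul_card_avoiding_le hx₁.le (disjoint_empty_left (univ : Finset ι))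
    fun W _ => card_inter_avoiding_le hx₀ hx₁.le hvars hΓ hD hp W
  rw [empty_union, avoiding_empty] at hall
  have hpos : (0 : ℝ) < #(avoiding Bad univ) := hall.trans_lt' <|
    mul_pos (pow_pos (by linarith) _) (by exact_mod_cast card_pos.mpr univ_nonempty)
  obtain ⟨f, hf⟩ := card_pos.mp (by exact_mod_cast hpos)
  exact ⟨f, fun i => mem_avoiding.mp hf i (mem_univ i)⟩

end LocalLemma

section Numeric
open Real

lemma exp_one_inv_le_one_sub_inv_pow (n : ℕ) : (exp 1)⁻¹ ≤ (1 - ((n : ℝ) + 1)⁻¹) ^ n := by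
  rcases Nat.eq_zero_or_pos n with rfl | hn
  · simpa using inv_le_one_of_one_le₀ (one_le_exp zero_le_one)
  have hn' : (0 : ℝ) < n := by exact_mod_cast hn
  have : 1 - ((n : ℝ) + 1)⁻¹ = (1 + (n : ℝ)⁻¹)⁻¹ := by field_simp; ring
  rw [this, inv_pow]
  exact inv_anti₀ (by positivity) one_add_inv_pow_le_exp

lemma exp_one_mul_two_mul_sq_add_one_le_two_pow {d : ℕ} (hd : 9 ≤ d) :
    exp 1 * (2 * d ^ 2 + 1) ≤ 2 ^ d := by
  suffices (2.7182818286 : ℝ) * (2 * d ^ 2 + 1) ≤ 2 ^ d from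
    (mul_le_mul_of_nonneg_right exp_one_lt_d9.le (by positivity)).trans this
  induction d, hd using Nat.le_induction with
  | base => norm_num
  | succ k hk ih =>
    have hk' : (9 : ℝ) ≤ k := by exact_mod_cast hk
    push_cast
    rw [pow_succ (2 : ℝ) k]
    nlinarith

end Numeric

section TotalGraph
variable (G : SimpleGraph V)

def TotalIncident (v : V) : V ⊕ G.edgeSet → Prop :=
  Sum.elim (fun u => u = v) (fun e => v ∈ (e : Sym2 V))

instance [DecidableEq V] (v : V) : DecidablePred (TotalIncident G v)
  | .inl u => inferInstanceAs (Decidable (u = v))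
  | .inr e => inferInstanceAs (Decidable (v ∈ (e : Sym2 V)))

variable {G}

lemma eq_or_adj_of_totalIncident {a b : V} {x : V ⊕ G.edgeSet} (ha : TotalIncident G a x)
    (hb : TotalIncident G b x) : a = b ∨ G.Adj a b := by
  cases x with
  | inl z => exact .inl (ha.symm.trans hb)
  | inr e =>
    refine or_iff_not_imp_left.mpr fun hab => ?_
    have he : (e : Sym2 V) = s(a, b) := (Sym2.mem_and_mem_iff hab).mp ⟨ha, hb⟩
    simpa [he] using e.2

lemma eq_inr_of_totalIncident {u v : V} (h : G.Adj u v) {x : V ⊕ G.edgeSet}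
    (hu : TotalIncident G u x) (hv : TotalIncident G v x) : x = .inr ⟨s(u, v), h⟩ := by
  cases x with
  | inl z => exact absurd (hu.symm.trans hv) h.ne
  | inr e => exact congrArg Sum.inr (Subtype.ext ((Sym2.mem_and_mem_iff h.ne).mp ⟨hu, hv⟩))

variable [Fintype V] [DecidableEq V] [DecidableRel G.Adj]

open Classical in
def edgeVars (m : G.edgeSet) : Finset (V ⊕ G.edgeSet) :=
  {x | ∃ a ∈ (m : Sym2 V), TotalIncident G a x}

lemma mem_edgeVars {m : G.edgeSet} {x : V ⊕ G.edgeSet} :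
    x ∈ edgeVars m ↔ ∃ a ∈ (m : Sym2 V), TotalIncident G a x := by
  simp [edgeVars]

lemma mem_incTotal {σ : LinearOrder (V ⊕ G.edgeSet)} {v : V} {x : V ⊕ G.edgeSet} :
    x ∈ incTotal G σ v ↔ TotalIncident G v x := by
  simp [incTotal, TotalIncident]

lemma totalSeqColor_eq_totalSeqColor_iff {σ : LinearOrder (V ⊕ G.edgeSet)}
    {w w' : V ⊕ G.edgeSet → ℝ} {v : V} :
    totalSeqColor G σ w v = totalSeqColor G σ w' v ↔ ∀ x, TotalIncident G v x → w x = w' x := by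
  simp [totalSeqColor, List.map_inj_left, mem_incTotal]

lemma card_filter_mem_edgeSet (z : V) :
    #{m : G.edgeSet | z ∈ (m : Sym2 V)} = G.degree z := by
  rw [← G.card_incidenceFinset_eq_degree]
  refine card_nbij (fun m => (m : Sym2 V)) ?_ (fun _ _ _ _ h => Subtype.ext h) ?_
  · intro m hm
    simpa [SimpleGraph.mem_incidenceFinset, SimpleGraph.incidenceSet] using hm
  · intro e he
    rw [mem_coe, SimpleGraph.mem_incidenceFinset] at he
    exact ⟨⟨e, he.1⟩, by simpa using he.2, rfl⟩

lemma card_filter_totalIncident (v : V) : #{x | TotalIncident G v x} = G.degree v + 1 := by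
  have : ({x | TotalIncident G v x} : Finset (V ⊕ G.edgeSet))
      = insert (.inl v) (({m : G.edgeSet | v ∈ (m : Sym2 V)} : Finset _).map .inr) := by
    ext (z | e) <;> rw [mem_filter] <;> simp [TotalIncident]
  rw [this, card_insert_of_notMem (by simp), card_map, card_filter_mem_edgeSet]

end TotalGraph

section ConflictEvent
variable {G : SimpleGraph V} [Fintype V] [DecidableEq V] [DecidableRel G.Adj]
  (σ : LinearOrder (V ⊕ G.edgeSet)) (val : V ⊕ G.edgeSet → Bool → ℝ)

open Classical in
noncomputable def conflictEvent (m : G.edgeSet) : Finset (V ⊕ G.edgeSet → Bool) :=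
  {f | ∃ a b, (m : Sym2 V) = s(a, b) ∧
    totalSeqColor G σ (fun x => val x (f x)) a = totalSeqColor G σ (fun x => val x (f x)) b}

variable {σ val}

lemma mem_conflictEvent_mk {u v : V} (h : G.Adj u v) {f : V ⊕ G.edgeSet → Bool} :
    f ∈ conflictEvent σ val ⟨s(u, v), h⟩ ↔
      totalSeqColor G σ (fun x => val x (f x)) u = totalSeqColor G σ (fun x => val x (f x)) v := by
  simp only [conflictEvent, mem_filter, mem_univ, true_and]
  constructor
  · rintro ⟨a, b, hab, hc⟩
    rcases Sym2.eq_iff.mp hab with ⟨rfl, rfl⟩ | ⟨rfl, rfl⟩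
    exacts [hc, hc.symm]
  · exact fun hc => ⟨u, v, rfl, hc⟩

lemma dependsOn_mem_conflictEvent (m : G.edgeSet) :
    DependsOn (· ∈ conflictEvent σ val m) (edgeVars m : Set (V ⊕ G.edgeSet)) := by
  obtain ⟨⟨u, v⟩, h⟩ := m
  intro f g hfg
  have hcolor : ∀ a ∈ s(u, v), totalSeqColor G σ (fun x => val x (f x)) a
      = totalSeqColor G σ (fun x => val x (g x)) a := fun a ha =>
    totalSeqColor_eq_totalSeqColor_iff.mpr fun x hx => by
      rw [hfg x (mem_edgeVars.mpr ⟨a, ha, hx⟩)]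
  simp only [mem_conflictEvent_mk h, hcolor u (Sym2.mem_mk_left u v),
    hcolor v (Sym2.mem_mk_right u v)]

lemma card_conflictEvent_mul_two_pow_le (hval : ∀ x, Function.Injective (val x)) {d : ℕ}
    (hreg : G.IsRegularOfDegree d) (m : G.edgeSet) :
    #(conflictEvent σ val m) * 2 ^ d ≤ 2 ^ Fintype.card (V ⊕ G.edgeSet) := by
  obtain ⟨⟨u, v⟩, h⟩ := m
  set T := ({x | TotalIncident G v x} : Finset (V ⊕ G.edgeSet)).erase (.inr ⟨s(u, v), h⟩)
  have hT : #T = d := by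
    rw [card_erase_of_mem (by rw [mem_filter]; simp [TotalIncident]), card_filter_totalIncident,
      hreg v, Nat.add_sub_cancel]
  have hTv : ∀ x ∈ T, TotalIncident G v x := fun x hx => (mem_filter.mp (mem_erase.mp hx).2).2
  have hTu : ∀ x, TotalIncident G u x → x ∉ T := fun x hu hx =>
    (mem_erase.mp hx).1 (eq_inr_of_totalIncident h hu (hTv x hx))
  rw [← hT]
  -- `c(u)` only reads bits off `T`, and on the event it determines the bits on `T` via `c(v)`
  refine card_mul_two_pow_card_le fun f hf g hg hfg => funext fun x => ?_
  rw [mem_conflictEvent_mk h] at hf hg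
  have hcu : totalSeqColor G σ (fun x => val x (f x)) u
      = totalSeqColor G σ (fun x => val x (g x)) u :=
    totalSeqColor_eq_totalSeqColor_iff.mpr fun y hy => by rw [hfg y (hTu y hy)]
  by_cases hx : x ∈ T
  · exact hval x (totalSeqColor_eq_totalSeqColor_iff.mp (hf.symm.trans (hcu.trans hg)) x (hTv x hx))
  · exact hfg x hx

lemma card_filter_not_disjoint_edgeVars_le {d : ℕ} (hreg : G.IsRegularOfDegree d)
    (m : G.edgeSet) : #{m' | ¬Disjoint (edgeVars m) (edgeVars m')} ≤ 2 * d ^ 2 := by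
  obtain ⟨⟨u, v⟩, h⟩ := m
  have hsub : ({m' | ¬Disjoint (edgeVars ⟨s(u, v), h⟩) (edgeVars m')} : Finset G.edgeSet)
      ⊆ (G.neighborFinset u ∪ G.neighborFinset v).biUnion
          fun z => ({m' : G.edgeSet | z ∈ (m' : Sym2 V)} : Finset _) := by
    intro m' hm'
    obtain ⟨x, hx, hx'⟩ := not_disjoint_iff.mp (mem_filter.mp hm').2
    obtain ⟨a, ha, hax⟩ := mem_edgeVars.mp hx
    obtain ⟨b, hb, hbx⟩ := mem_edgeVars.mp hx'
    refine mem_biUnion.mpr ⟨b, ?_, mem_filter.mpr ⟨mem_univ _, hb⟩⟩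
    have huv : G.Adj u v := h
    rcases Sym2.mem_iff.mp ha with rfl | rfl <;>
      rcases eq_or_adj_of_totalIncident hax hbx with rfl | hab <;>
      simp_all [huv.symm]
  calc #{m' | ¬Disjoint (edgeVars ⟨s(u, v), h⟩) (edgeVars m')}
      ≤ #(G.neighborFinset u ∪ G.neighborFinset v) * d :=
        (card_le_card hsub).trans <| card_biUnion_le_card_mul _ _ _ fun z _ =>
          (card_filter_mem_edgeSet z).trans_le (hreg z).le
    _ ≤ (d + d) * d := by
        gcongr
        refine (card_union_le _ _).trans ?_
        rw [G.card_neighborFinset_eq_degree, G.card_neighborFinset_eq_degree, hreg u, hreg v]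
    _ = 2 * d ^ 2 := by ring

lemma card_conflictEvent_le (hval : ∀ x, Function.Injective (val x)) {d : ℕ} (hd : 9 ≤ d)
    (hreg : G.IsRegularOfDegree d) (m : G.edgeSet) :
    (#(conflictEvent σ val m) : ℝ) ≤ ((2 * d ^ 2 : ℕ) + 1 : ℝ)⁻¹ *
      (1 - ((2 * d ^ 2 : ℕ) + 1 : ℝ)⁻¹) ^ (2 * d ^ 2) * 2 ^ Fintype.card (V ⊕ G.edgeSet) := by
  set x := ((2 * d ^ 2 : ℕ) + 1 : ℝ)⁻¹
  have hcount : (#(conflictEvent σ val m) : ℝ) * 2 ^ d ≤ 2 ^ Fintype.card (V ⊕ G.edgeSet) := by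
    exact_mod_cast card_conflictEvent_mul_two_pow_le hval hreg m
  have hexp : ((2 : ℝ) ^ d)⁻¹ ≤ x * (Real.exp 1)⁻¹ := by
    rw [← mul_inv]
    refine inv_anti₀ (by positivity) ?_
    have := exp_one_mul_two_mul_sq_add_one_le_two_pow hd
    push_cast
    linarith
  calc (#(conflictEvent σ val m) : ℝ)
      ≤ ((2 : ℝ) ^ d)⁻¹ * 2 ^ Fintype.card (V ⊕ G.edgeSet) := by
        rw [inv_mul_eq_div, le_div_iff₀ (by positivity)]
        exact hcount
    _ ≤ x * (Real.exp 1)⁻¹ * 2 ^ Fintype.card (V ⊕ G.edgeSet) := by gcongr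
    _ ≤ x * (1 - x) ^ (2 * d ^ 2) * 2 ^ Fintype.card (V ⊕ G.edgeSet) := by
        gcongr
        exact exp_one_inv_le_one_sub_inv_pow (2 * d ^ 2)

end ConflictEvent

lemma exists_injective_bool_mem {α : Type*} {s : Finset α} (hs : 1 < #s) :
    ∃ v : Bool → α, Function.Injective v ∧ ∀ b, v b ∈ s := by
  obtain ⟨a, ha, b, hb, hab⟩ := one_lt_card.mp hs
  refine ⟨fun t => cond t a b, fun t t' htt' => ?_, fun t => by cases t <;> assumption⟩
  cases t <;> cases t' <;> simp_all [eq_comm]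

/-- If `G` is `d`-regular with `d ≥ 9`, then `ch_σ^t(G) ≤ 2`. -/
theorem stmt_10 [Fintype V] [DecidableEq V] (G : SimpleGraph V) [DecidableRel G.Adj]
    (d : ℕ) (hd : 9 ≤ d) (hreg : G.IsRegularOfDegree d)
    (σ : LinearOrder (V ⊕ G.edgeSet))
    (L : V ⊕ G.edgeSet → Finset ℝ) (hL : ∀ x, (L x).card = 2) :
    ∃ w : V ⊕ G.edgeSet → ℝ, (∀ x, w x ∈ L x) ∧ ProperTotalSeq G σ w := by
  choose val hval hvalL using fun x => exists_injective_bool_mem (s := L x) (by rw [hL x]; norm_num)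
  have hx₁ : ((2 * d ^ 2 : ℕ) + 1 : ℝ)⁻¹ < 1 :=
    inv_lt_one_of_one_lt₀ (lt_add_of_pos_left 1 (by positivity))
  obtain ⟨f, hf⟩ := lovasz_local_lemma (Bad := conflictEvent σ val)
    (Γ := fun m => {m' | ¬Disjoint (edgeVars m) (edgeVars m')}) (by positivity) hx₁
    dependsOn_mem_conflictEvent (fun m m' _ hm' => by simpa using hm')
    (card_filter_not_disjoint_edgeVars_le hreg) (card_conflictEvent_le hval hd hreg)
  exact ⟨fun x => val x (f x), fun x => hvalL x (f x),
    fun u v h hc => hf ⟨s(u, v), h⟩ ((mem_conflictEvent_mk h).mpr hc)⟩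
end
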